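/- arXiv:1502.04340 — 2 statements merged into one kernel-verified Lean document; each statement's English description precedes it below -/
import Mathlib

section
/- Let C be a class of {0,1}-valued functions on X and f ∈ C^k. Suppose the defining multiset is unique: whenever f = g_1 ∧ ... ∧ g_k with g_i ∈ C, the set {g_1,...,g_k} equals {f_1,...,f_k}. Then for each i and each point x essential for f_i with respect to C, one has f_j(x) = 1 for all j ≠ i. -/
/-- `x` is an essential point of `f` with respect to the class `D`:
some `g ∈ D` differs from `f` exactly at `x`. -/
def Essential {X : Type*} (D : Set (X → Bool)) (f : X → Bool) (x : X) : Prop :=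
  ∃ g ∈ D, g x ≠ f x ∧ ∀ y, y ≠ x → g y = f y

/-- The class `C^k` of pointwise conjunctions of `k` functions from `C`. -/
def ConjClass {X : Type*} (C : Set (X → Bool)) (k : ℕ) : Set (X → Bool) :=
  {f | ∃ g : Fin k → X → Bool, (∀ i, g i ∈ C) ∧ ∀ x, f x = true ↔ ∀ i, g i x = true}


theorem stmt2 {X : Type*} (C : Set (X → Bool)) (k : ℕ) (F : Fin k → X → Bool)
    (hF : ∀ i, F i ∈ C) (f : X → Bool)
    (hf : ∀ x, f x = true ↔ ∀ i, F i x = true)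
    (huniq : ∀ G : Fin k → X → Bool, (∀ i, G i ∈ C) →
      (∀ x, f x = true ↔ ∀ i, G i x = true) → Set.range G = Set.range F)
    (i : Fin k) (x : X) (hess : Essential C (F i) x) :
    ∀ j, j ≠ i → F j x = true := by
  classical
  intro j hj
  by_contra hFj
  rw [Bool.not_eq_true] at hFj
  obtain ⟨g, hgC, hgx, hgoff⟩ := hess
  have hfx : f x = false := by
    rw [← Bool.not_eq_true, hf]
    push_neg
    exact ⟨j, by simp [hFj]⟩
  -- Step 1: replacing index i by g still represents f
  have hG : Set.range (fun m => if m = i then g else F m) = Set.range F := by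
    apply huniq
    · intro m; by_cases h : m = i <;> simp [h, hgC, hF]
    · intro y
      by_cases hy : y = x
      · subst hy
        constructor
        · intro h; exact absurd h (by simp [hfx])
        · intro h
          have hh := h j
          simp only [if_neg hj] at hh
          rw [hFj] at hh; exact absurd hh (by simp)
      · have key : ∀ m, (if m = i then g else F m) y = F m y := by
          intro m; by_cases h : m = i <;> simp [h, hgoff y hy]
        simp only [key]; exact hf y
  have hgrange : g ∈ Set.range F := by
    rw [← hG]; exact ⟨i, by simp⟩
  cases hFix : F i x with
  | false =>
    have hgx' : g x = true := by
      cases h : g x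
      · exact absurd (h.trans hFix.symm) hgx
      · rfl
    have hFig : F i ≠ g := by
      intro e; rw [e, hgx'] at hFix; exact absurd hFix (by simp)
    -- replace all copies of g by F i
    have hG4 : Set.range (fun m => if F m = g then F i else F m) = Set.range F := by
      apply huniq
      · intro m; by_cases h : F m = g <;> simp [h, hF]
      · intro y
        by_cases hy : y = x
        · subst hy
          constructor
          · intro h; exact absurd h (by simp [hfx])
          · intro h
            have hh := h i
            simp only [if_neg hFig] at hh
            rw [hFix] at hh; exact absurd hh (by simp)
        · have key : ∀ m, (if F m = g then F i else F m) y = F m y := by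
            intro m
            by_cases h : F m = g
            · rw [if_pos h, h]; exact (hgoff y hy).symm
            · simp [h]
          simp only [key]; exact hf y
    have : g ∈ Set.range fun m => if F m = g then F i else F m := by
      rw [hG4]; exact hgrange
    obtain ⟨m, hm⟩ := this
    by_cases h : F m = g
    · simp only [if_pos h] at hm; exact hFig hm
    · simp only [if_neg h] at hm; exact h hm
  | true =>
    -- replace all copies of F i by g
    have hgx' : g x = false := by
      cases h : g x
      · rfl
      · exact absurd (h.trans hFix.symm) hgx
    have hgFi : g ≠ F i := fun e => hgx (by rw [e])
    have hG6 : Set.range (fun m => if F m = F i then g else F m) = Set.range F := by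
      apply huniq
      · intro m; by_cases h : F m = F i <;> simp [h, hgC, hF]
      · intro y
        by_cases hy : y = x
        · subst hy
          constructor
          · intro h; exact absurd h (by simp [hfx])
          · intro h
            have hh := h j
            by_cases hji : F j = F i
            · rw [if_pos hji, hgx'] at hh; exact absurd hh (by simp)
            · rw [if_neg hji, hFj] at hh; exact absurd hh (by simp)
        · have key : ∀ m, (if F m = F i then g else F m) y = F m y := by
            intro m
            by_cases h : F m = F i
            · rw [if_pos h, h]; exact hgoff y hy
            · simp [h]
          simp only [key]; exact hf y
    have : F i ∈ Set.range fun m => if F m = F i then g else F m := by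
      rw [hG6]; exact ⟨i, rfl⟩
    obtain ⟨m, hm⟩ := this
    by_cases h : F m = F i
    · simp only [if_pos h] at hm; exact hgFi hm
    · simp only [if_neg h] at hm; exact h hm
end

section
/- Let C be a class of {0,1}-valued functions on X and suppose f ∈ C^k has a unique defining set {f_1,...,f_k} ⊆ C. Then for ν ∈ {0,1}, the union over i of the ν-valued essential points of f_i with respect to C is contained in the set of ν-valued essential points of f with respect to C^k. -/
theorem stmt3 {X : Type*} (C : Set (X → Bool)) (k : ℕ) (F : Fin k → X → Bool)
    (hF : ∀ i, F i ∈ C) (f : X → Bool)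
    (hf : ∀ x, f x = true ↔ ∀ i, F i x = true)
    (huniq : ∀ G : Fin k → X → Bool, (∀ i, G i ∈ C) →
      (∀ x, f x = true ↔ ∀ i, G i x = true) → Set.range G = Set.range F) :
    ∀ (ν : Bool) (i : Fin k) (x : X),
      Essential C (F i) x → F i x = ν →
      Essential (ConjClass C k) f x ∧ f x = ν := by
  rintro ν i x ⟨g, hgC, hgx, hgy⟩ hFix
  classical
  set G : Fin k → X → Bool := fun l => if F l = F i then g else F l with hG
  have hGC : ∀ l, G l ∈ C := by
    intro l
    simp only [hG]
    split
    · exact hgC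
    · exact hF l
  set h : X → Bool := fun y => decide (∀ l, G l y = true) with hh
  have hrep : ∀ y, h y = true ↔ ∀ l, G l y = true := by
    intro y; simp [hh]
  have hGy : ∀ y, y ≠ x → ∀ l, G l y = F l y := by
    intro y hy l
    simp only [hG]
    split
    · next heq => rw [heq]; exact hgy y hy
    · rfl
  have hhy : ∀ y, y ≠ x → h y = f y := by
    intro y hy
    have hiff : (h y = true) ↔ (f y = true) := by
      rw [hrep, hf]
      constructor
      · intro H l; have := H l; rwa [hGy y hy l] at this
      · intro H l; rw [hGy y hy l]; exact H l
    cases hv : h y <;> cases fv : f y <;> simp_all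
  have hgne : g ≠ F i := fun e => hgx (by rw [e])
  have hhx : h x ≠ f x := by
    intro hx
    have hfun : ∀ y, f y = true ↔ ∀ l, G l y = true := by
      intro y
      by_cases hy : y = x
      · rw [hy, ← hx]; exact hrep x
      · rw [← hhy y hy]; exact hrep y
    have hr := huniq G hGC hfun
    have hFi : F i ∈ Set.range G := hr ▸ Set.mem_range_self i
    obtain ⟨l, hl⟩ := hFi
    by_cases hc : F l = F i
    · apply hgne; rw [← hl]; simp [hG, hc]
    · apply hc; rw [← hl]; simp [hG, hc]
  have hGix : G i x = g x := by simp [hG]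
  have hfx : f x = ν := by
    cases hν : ν
    · subst hν
      cases hfv : f x
      · rfl
      · exact absurd (((hf x).mp hfv) i) (by rw [hFix]; simp)
    · subst hν
      have hgxf : g x = false := by
        cases hgv : g x
        · rfl
        · rw [hFix] at hgx; exact absurd hgv hgx
      have hhxf : h x = false := by
        cases hhv : h x
        · rfl
        · have := (hrep x).mp hhv i
          rw [hGix, hgxf] at this
          exact absurd this (by simp)
      cases hfv : f x
      · exact absurd (hhxf.trans hfv.symm) hhx
      · rfl
  exact ⟨⟨h, ⟨G, hGC, hrep⟩, hhx, hhy⟩, hfx⟩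
end
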